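/- arXiv:math/0310490 — 2 statements merged into one kernel-verified Lean document; each statement's English description precedes it below -/
import Mathlib

section
/- In the Weyl algebra A₁ = ℂ⟨z, ∂⟩/(∂z - z∂ = 1), the right ideal generated by z² and 1 - z∂ is a proper nonzero right ideal that is not principal (not generated by a single element). -/
set_option synthInstance.maxHeartbeats 1000000
set_option maxHeartbeats 2000000
/-- The first Weyl algebra `A₁ = ℂ⟨z,∂⟩/(∂z - z∂ = 1)`, realized concretely (and
faithfully) as the subalgebra of `End_ℂ(ℂ[x])` generated by multiplication by `x`
and differentiation. -/
noncomputable def WeylAlgebra : Subalgebra ℂ (Module.End ℂ (Polynomial ℂ)) :=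
  Algebra.adjoin ℂ
    {LinearMap.mulLeft ℂ (Polynomial.X : Polynomial ℂ),
     (Polynomial.derivative : Polynomial ℂ →ₗ[ℂ] Polynomial ℂ)}

/-- The generator `z` (multiplication by the variable). -/
noncomputable def Wz : WeylAlgebra :=
  ⟨LinearMap.mulLeft ℂ (Polynomial.X : Polynomial ℂ),
    Algebra.subset_adjoin (Set.mem_insert _ _)⟩

/-- The generator `∂` (differentiation). -/
noncomputable def Wd : WeylAlgebra :=
  ⟨(Polynomial.derivative : Polynomial ℂ →ₗ[ℂ] Polynomial ℂ),
    Algebra.subset_adjoin (Set.mem_insert_of_mem _ rfl)⟩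

/-!
Grade the Weyl algebra by weight, `z` having weight `1` and `∂` weight `-1`. The weight
components of an element act on monomials `X ^ n` by scalars polynomial in `n`; since a nonzero
polynomial has only finitely many roots in `ℕ`, top and bottom weights add under composition.

If `z²A₁ + (1 - z∂)A₁ = gA₁`, write `g c = z²` and `g d = 1 - z∂`. As `z²` is homogeneous, so is
`g`: `X ^ R * g (X ^ m) = q(m) X ^ (m + T)`. The coefficient of `X ^ (n + 2)` in `g (c (X ^ n))`
gives `u(n) q(n + δ) = 1` for all `n` with `u` a polynomial, so `q` is a nonzero constant, and
`g (d 1) = 1` forces `T = R`. Hence `g` is a nonzero scalar and `gA₁ = A₁`, whereas every element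
of the ideal maps `ℂ[X]` into the polynomials without linear term.
-/

open Polynomial Filter

variable {K : Type*} [Field K]

/-- The coefficients of `P` are polynomials in the exponent `n`; the coefficient of `X ^ t` is the
component of `w` of weight `t - R`. -/
def HasWeightExpansion (w : Module.End K K[X]) (R : ℕ) (P : K[X][X]) : Prop :=
  ∀ n : ℕ, X ^ R * w (X ^ n) = X ^ n * P.map (evalRingHom (n : K))

lemma hasWeightExpansion_zero (R : ℕ) : HasWeightExpansion (0 : Module.End K K[X]) R 0 :=
  fun n => by simp

lemma hasWeightExpansion_one : HasWeightExpansion (1 : Module.End K K[X]) 0 1 := fun n => by simp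

lemma hasWeightExpansion_algebraMap (b : K) (R : ℕ) :
    HasWeightExpansion (algebraMap K (Module.End K K[X]) b) R (C (C b) * X ^ R) := fun n => by
  simp only [Module.algebraMap_end_apply, smul_eq_C_mul, Polynomial.map_mul, map_C,
    coe_evalRingHom, eval_C, Polynomial.map_pow, map_X]
  ring

namespace HasWeightExpansion

variable {w w' : Module.End K K[X]} {R : ℕ} {P P' : K[X][X]}

lemma add (h : HasWeightExpansion w R P) (h' : HasWeightExpansion w' R P') :
    HasWeightExpansion (w + w') R (P + P') := fun n => by
  simp [mul_add, h n, h' n]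

lemma smul (a : K) (h : HasWeightExpansion w R P) :
    HasWeightExpansion (a • w) R (C (C a) * P) := fun n => by
  rw [LinearMap.smul_apply, smul_eq_C_mul, mul_left_comm, h n]
  simp [mul_left_comm]

lemma X_pow_mul (h : HasWeightExpansion w R P) (k : ℕ) :
    HasWeightExpansion w (k + R) (X ^ k * P) := fun n => by
  simp only [pow_add, mul_assoc, h n, Polynomial.map_mul, Polynomial.map_pow, map_X]
  ring

lemma mulLeft_X (h : HasWeightExpansion w R P) :
    HasWeightExpansion (LinearMap.mulLeft K X * w) R (X * P) := fun n => by
  rw [Module.End.mul_apply, LinearMap.mulLeft_apply, mul_left_comm, h n]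
  simp [mul_left_comm]

lemma derivative_mul (h : HasWeightExpansion w R P) :
    HasWeightExpansion (derivative * w) (R + 1) (C (X - C (R : K)) * P + X * derivative P) :=
  fun n => by
  rw [Module.End.mul_apply]
  have key : X ^ (R + 1) * derivative (w (X ^ n)) =
      derivative (X * (X ^ R * w (X ^ n))) - C ((R : K) + 1) * (X ^ R * w (X ^ n)) := by
    rw [← mul_assoc, ← pow_succ', Polynomial.derivative_mul, derivative_X_pow]
    simp only [Nat.cast_add, Nat.cast_one, map_add, map_natCast, map_one, add_tsub_cancel_right]
    ring
  rw [key, h n, ← mul_assoc, ← pow_succ', Polynomial.derivative_mul, derivative_X_pow]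
  simp only [Nat.cast_add, Nat.cast_one, map_add, map_natCast, map_one, add_tsub_cancel_right,
    derivative_map, map_sub, Polynomial.map_add, Polynomial.map_sub, Polynomial.map_mul, map_C,
    coe_evalRingHom, eval_X, Polynomial.map_natCast, map_X]
  ring

end HasWeightExpansion

theorem exists_hasWeightExpansion_of_mem_adjoin {w : Module.End K K[X]}
    (hw : w ∈ Algebra.adjoin K {LinearMap.mulLeft K X, derivative}) :
    ∃ R P, HasWeightExpansion w R P := by
  replace hw : w ∈ Subalgebra.toSubmodule (Algebra.adjoin K _) := hw
  rw [Algebra.adjoin_eq_span] at hw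
  induction hw using Submodule.span_induction with
  | mem x hx =>
    induction hx using Submonoid.closure_induction_left with
    | one => exact ⟨0, 1, hasWeightExpansion_one⟩
    | mul_left x hx y _ ih =>
      obtain ⟨R, P, h⟩ := ih
      rcases hx with rfl | rfl
      · exact ⟨R, _, h.mulLeft_X⟩
      · exact ⟨R + 1, _, h.derivative_mul⟩
  | zero => exact ⟨0, 0, hasWeightExpansion_zero 0⟩
  | add x y _ _ hx hy =>
    obtain ⟨R, P, h⟩ := hx
    obtain ⟨R', P', h'⟩ := hy
    exact ⟨R' + R, _, (h.X_pow_mul R').add (add_comm R R' ▸ h'.X_pow_mul R)⟩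
  | smul a x _ hx =>
    obtain ⟨R, P, h⟩ := hx
    exact ⟨R, _, h.smul a⟩

lemma eventually_eval_natCast_ne_zero [CharZero K] {q : K[X]} (hq : q ≠ 0) :
    ∀ᶠ n : ℕ in atTop, q.eval (n : K) ≠ 0 := by
  rw [← Nat.cofinite_eq_atTop]
  exact ((finite_setOfPred_isRoot hq).preimage
    Nat.cast_injective.injOn).eventually_cofinite_notMem

lemma eq_C_mul_X_pow_of_natTrailingDegree_eq_natDegree {S : Type*} [Semiring S] {p : S[X]}
    (h : p.natTrailingDegree = p.natDegree) : p = C p.leadingCoeff * X ^ p.natDegree := by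
  ext j
  rw [coeff_C_mul_X_pow]
  split_ifs with hj
  · rw [hj]
    rfl
  · rcases lt_or_gt_of_ne hj with hj | hj
    · exact coeff_eq_zero_of_lt_natTrailingDegree (h ▸ hj)
    · exact coeff_eq_zero_of_natDegree_lt hj

lemma natDegree_eq_zero_of_eval_mul_eval_add_eq_one [CharZero K] {U q : K[X]} {a : K}
    (h : ∀ n : ℕ, U.eval (n : K) * q.eval ((n : K) + a) = 1) : q.natDegree = 0 := by
  have hprod : U * q.comp (X + C a) = 1 :=
    eq_of_infinite_eval_eq _ _
      (Set.infinite_of_injective_forall_mem Nat.cast_injective fun n => by simp [h n])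
  have := natDegree_eq_zero_of_isUnit (IsUnit.of_mul_eq_one_right _ hprod)
  rwa [natDegree_comp, natDegree_X_add_C, mul_one] at this

namespace HasWeightExpansion

variable {w w' g c : Module.End K K[X]} {R R' T k : ℕ} {P P' : K[X][X]} {q : K[X]}

lemma eq_of_hasWeightExpansion (h : HasWeightExpansion w R P) (h' : HasWeightExpansion w' R P) :
    w = w' := by
  refine lhom_ext' fun n => LinearMap.ext fun a => ?_
  simp only [LinearMap.comp_apply, ← smul_X_eq_monomial, map_smul]
  exact congrArg _ (mul_left_cancel₀ (pow_ne_zero R X_ne_zero) ((h n).trans (h' n).symm))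

lemma ne_zero (h : HasWeightExpansion w R P) (hw : w ≠ 0) : P ≠ 0 := by
  rintro rfl
  exact hw (h.eq_of_hasWeightExpansion (hasWeightExpansion_zero R))

lemma coeff_apply_X_pow (h : HasWeightExpansion w R P) (n k : ℕ) :
    (w (X ^ n)).coeff (n + k) = (P.coeff (R + k)).eval (n : K) := by
  have := congrArg (coeff · (R + (n + k))) (h n)
  simp only [coeff_X_pow_mul', coeff_map, coe_evalRingHom] at this
  rwa [if_pos (Nat.le_add_right _ _), if_pos (by omega), Nat.add_sub_cancel_left,
    show R + (n + k) - n = R + k by omega] at this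

lemma coeff_apply (h : HasWeightExpansion w R P) (p : K[X]) (j : ℕ) :
    (X ^ R * w p).coeff j =
      ∑ m ∈ p.support, p.coeff m * if m ≤ j then (P.coeff (j - m)).eval (m : K) else 0 := by
  conv_lhs => rw [p.as_sum_support]
  simp only [map_sum, Finset.mul_sum, finsetSum_coeff, ← smul_X_eq_monomial, map_smul,
    mul_smul_comm, h _, coeff_smul, coeff_X_pow_mul', coeff_map, coe_evalRingHom, smul_eq_mul]

lemma coeff_apply_eq_zero_of_lt (h : HasWeightExpansion w R P) {p : K[X]} {j : ℕ}
    (hj : j < p.natTrailingDegree + P.natTrailingDegree) : (X ^ R * w p).coeff j = 0 := by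
  rw [h.coeff_apply]
  refine Finset.sum_eq_zero fun m hm => ?_
  have := natTrailingDegree_le_of_mem_supp m hm
  split_ifs
  · rw [coeff_eq_zero_of_lt_natTrailingDegree (p := P) (by omega), eval_zero, mul_zero]
  · rw [mul_zero]

lemma coeff_apply_eq_zero_of_gt (h : HasWeightExpansion w R P) {p : K[X]} {j : ℕ}
    (hj : p.natDegree + P.natDegree < j) : (X ^ R * w p).coeff j = 0 := by
  rw [h.coeff_apply]
  refine Finset.sum_eq_zero fun m hm => ?_
  have := le_natDegree_of_mem_supp m hm
  split_ifs
  · rw [coeff_eq_zero_of_natDegree_lt (p := P) (by omega), eval_zero, mul_zero]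
  · rw [mul_zero]

lemma coeff_apply_natTrailingDegree (h : HasWeightExpansion w R P) (p : K[X]) :
    (X ^ R * w p).coeff (p.natTrailingDegree + P.natTrailingDegree) =
      p.trailingCoeff * P.trailingCoeff.eval (p.natTrailingDegree : K) := by
  rcases eq_or_ne p 0 with rfl | hp
  · simp
  rw [h.coeff_apply, Finset.sum_eq_single_of_mem _ (natTrailingDegree_mem_support_of_nonzero hp)]
  · rw [if_pos (by omega), Nat.add_sub_cancel_left]
    rfl
  · intro m hm hne
    have := natTrailingDegree_le_of_mem_supp m hm
    split_ifs
    · rw [coeff_eq_zero_of_lt_natTrailingDegree (p := P) (by omega), eval_zero, mul_zero]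
    · rw [mul_zero]

lemma coeff_apply_natDegree (h : HasWeightExpansion w R P) (p : K[X]) :
    (X ^ R * w p).coeff (p.natDegree + P.natDegree) =
      p.leadingCoeff * P.leadingCoeff.eval (p.natDegree : K) := by
  rcases eq_or_ne p 0 with rfl | hp
  · simp
  rw [h.coeff_apply, Finset.sum_eq_single_of_mem _ (natDegree_mem_support_of_nonzero hp)]
  · rw [if_pos (by omega), Nat.add_sub_cancel_left]
    rfl
  · intro m hm hne
    have := le_natDegree_of_mem_supp m hm
    split_ifs
    · rw [coeff_eq_zero_of_natDegree_lt (p := P) (by omega), eval_zero, mul_zero]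
    · rw [mul_zero]

lemma natDegree_apply (h : HasWeightExpansion w R P) {p : K[X]} (hp : p ≠ 0)
    (hP : P.leadingCoeff.eval (p.natDegree : K) ≠ 0) :
    (X ^ R * w p).natDegree = p.natDegree + P.natDegree :=
  natDegree_eq_of_le_of_coeff_ne_zero
    (natDegree_le_iff_coeff_eq_zero.2 fun _ hj => h.coeff_apply_eq_zero_of_gt hj)
    (by rw [h.coeff_apply_natDegree]; exact mul_ne_zero (leadingCoeff_ne_zero.2 hp) hP)

lemma natTrailingDegree_apply (h : HasWeightExpansion w R P) {p : K[X]} (hp : p ≠ 0)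
    (hP : P.trailingCoeff.eval (p.natTrailingDegree : K) ≠ 0) :
    (X ^ R * w p).natTrailingDegree = p.natTrailingDegree + P.natTrailingDegree := by
  have hcoeff : (X ^ R * w p).coeff (p.natTrailingDegree + P.natTrailingDegree) ≠ 0 := by
    rw [h.coeff_apply_natTrailingDegree]
    exact mul_ne_zero (trailingCoeff_nonzero_iff_nonzero.2 hp) hP
  exact le_antisymm (natTrailingDegree_le_of_ne_zero hcoeff)
    (le_natTrailingDegree (fun h0 => hcoeff (by rw [h0, coeff_zero]))
      fun _ hj => h.coeff_apply_eq_zero_of_lt hj)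

lemma X_pow_natTrailingDegree_dvd (h : HasWeightExpansion w R P) (p : K[X]) :
    X ^ P.natTrailingDegree ∣ X ^ R * w p :=
  X_pow_dvd_iff.2 fun _ hj => h.coeff_apply_eq_zero_of_lt (by omega)

lemma le_natTrailingDegree_apply_X_pow (h : HasWeightExpansion w R P) {n : ℕ}
    (hn : w (X ^ n) ≠ 0) : n ≤ R + (w (X ^ n)).natTrailingDegree := by
  have hdvd : X ^ n ∣ X ^ R * w (X ^ n) := h n ▸ dvd_mul_right _ _
  have := le_natTrailingDegree (mul_ne_zero (pow_ne_zero R X_ne_zero) hn)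
    (X_pow_dvd_iff.1 hdvd)
  rwa [mul_comm, natTrailingDegree_mul_X_pow hn, add_comm] at this

lemma coeff_apply_add (h : HasWeightExpansion g R (C q * X ^ T)) (p : K[X]) (i : ℕ) :
    (X ^ R * g p).coeff (i + T) = p.coeff i * q.eval (i : K) := by
  rw [h.coeff_apply, Finset.sum_eq_single i]
  · rw [if_pos (by omega), Nat.add_sub_cancel_left, coeff_C_mul_X_pow, if_pos rfl]
  · intro m _ hm
    split_ifs with hmi
    · rw [coeff_C_mul_X_pow, if_neg (by omega), eval_zero, mul_zero]
    · rw [mul_zero]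
  · intro hi
    rw [notMem_support_iff.1 hi, zero_mul]

theorem natTrailingDegree_eq_natDegree_of_comp_eq_X_pow_mul [CharZero K]
    (hg : HasWeightExpansion g R P) (hc : HasWeightExpansion c R' P')
    (hgc : ∀ p, g (c p) = X ^ k * p) : P.natTrailingDegree = P.natDegree := by
  have hc0 : ∀ n, c (X ^ n) ≠ 0 := fun n h0 => by simpa [h0] using hgc (X ^ n)
  have hP : P ≠ 0 := hg.ne_zero (by rintro rfl; simpa using (hgc 1).symm)
  have htrail : Tendsto (fun n => (c (X ^ n)).natTrailingDegree) atTop atTop :=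
    tendsto_atTop_mono
      (fun n => Nat.sub_le_iff_le_add'.2 (hc.le_natTrailingDegree_apply_X_pow (hc0 n)))
      (tendsto_sub_atTop_nat R')
  have hdeg : Tendsto (fun n => (c (X ^ n)).natDegree) atTop atTop :=
    tendsto_atTop_mono (fun n => natTrailingDegree_le_natDegree _) htrail
  -- For large `n`, both the degree and the trailing degree of `g (c (X ^ n)) = X ^ (k + n)`
  -- are additive, so the weight spread of `g` vanishes.
  obtain ⟨n, hlead, htc⟩ :=
    ((hdeg.eventually (eventually_eval_natCast_ne_zero (leadingCoeff_ne_zero.2 hP))).and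
      (htrail.eventually
        (eventually_eval_natCast_ne_zero (trailingCoeff_nonzero_iff_nonzero.2 hP)))).exists
  have hdeg_eq := hg.natDegree_apply (hc0 n) hlead
  have htrail_eq := hg.natTrailingDegree_apply (hc0 n) htc
  rw [hgc, ← mul_assoc, ← pow_add, ← pow_add] at hdeg_eq htrail_eq
  rw [natDegree_X_pow] at hdeg_eq
  rw [natTrailingDegree_X_pow] at htrail_eq
  have := natTrailingDegree_le_natDegree (c (X ^ n))
  have := natTrailingDegree_le_natDegree P
  omega

lemma eval_mul_eval_eq_one_of_comp_eq_X_pow_mul (hg : HasWeightExpansion g R (C q * X ^ T))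
    (hc : HasWeightExpansion c R' P') (hgc : ∀ p, g (c p) = X ^ k * p) (hTR : T ≤ R) (n : ℕ) :
    (P'.coeff (R' + (R + k - T))).eval (n : K) * q.eval ((n : K) + ((R + k - T : ℕ) : K)) =
      1 := by
  have := hg.coeff_apply_add (c (X ^ n)) (n + (R + k - T))
  rw [hgc, ← mul_assoc, ← pow_add, ← pow_add, hc.coeff_apply_X_pow,
    show n + (R + k - T) + T = R + k + n by omega, coeff_X_pow_self] at this
  exact_mod_cast this.symm

theorem eq_algebraMap_of_comp_eq_X_pow_mul [CharZero K]
    (hg : HasWeightExpansion g R P) (hc : HasWeightExpansion c R' P')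
    (hgc : ∀ p, g (c p) = X ^ k * p) {u : K[X]} (hu : g u = 1) :
    ∃ b : K, b ≠ 0 ∧ g = algebraMap K (Module.End K K[X]) b := by
  have hP : P ≠ 0 := hg.ne_zero (by rintro rfl; simp at hu)
  have hhom := hg.natTrailingDegree_eq_natDegree_of_comp_eq_X_pow_mul hc hgc
  have hmono := eq_C_mul_X_pow_of_natTrailingDegree_eq_natDegree hhom
  have hTR : P.natDegree ≤ R := by
    have := hg.X_pow_natTrailingDegree_dvd u
    rwa [hu, mul_one, hhom, pow_dvd_pow_iff X_ne_zero not_isUnit_X] at this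
  obtain ⟨b, hb⟩ : ∃ b, P.leadingCoeff = C b :=
    ⟨_, eq_C_of_natDegree_eq_zero (natDegree_eq_zero_of_eval_mul_eval_add_eq_one
      ((hmono ▸ hg).eval_mul_eval_eq_one_of_comp_eq_X_pow_mul hc hgc hTR))⟩
  have hb0 : b ≠ 0 := by
    rintro rfl
    exact leadingCoeff_ne_zero.2 hP (by rw [hb, C_0])
  have hRT : R ≤ P.natDegree := by
    have h0 := hg 0
    rw [hmono, hb] at h0
    simp only [pow_zero, one_mul, Polynomial.map_mul, map_C, Polynomial.map_pow, map_X,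
      coe_evalRingHom, eval_C] at h0
    have := h0 ▸ dvd_mul_right (X ^ R) (g 1)
    rwa [(isUnit_C.2 hb0.isUnit).dvd_mul_left, pow_dvd_pow_iff X_ne_zero not_isUnit_X] at this
  refine ⟨b, hb0, hg.eq_of_hasWeightExpansion ?_⟩
  rw [hmono, hb, le_antisymm hTR hRT]
  exact hasWeightExpansion_algebraMap b R

end HasWeightExpansion

def Subalgebra.rightIdealOfRangeLE {S M : Type*} [CommSemiring S] [AddCommMonoid M]
    [Module S M] (A : Subalgebra S (Module.End S M)) (V : Submodule S M) :
    Submodule Aᵐᵒᵖ A where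
  carrier := {w | ∀ m, (w : Module.End S M) m ∈ V}
  add_mem' ha hb m := V.add_mem (ha m) (hb m)
  zero_mem' _ := V.zero_mem
  smul_mem' _ _ hw _ := hw _

section WeylAlgebra

open Submodule

lemma Wd_mul_Wz_sub_Wz_mul_Wd : Wd * Wz - Wz * Wd = 1 := by
  refine Subtype.ext (LinearMap.ext fun p => ?_)
  show derivative (X * p) - X * derivative p = p
  simp [Polynomial.derivative_mul]

lemma coe_Wz_sq_apply (p : ℂ[X]) :
    ((Wz ^ 2 : WeylAlgebra) : Module.End ℂ ℂ[X]) p = X ^ 2 * p := by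
  show X * (X * p) = _
  ring

lemma coe_one_sub_Wz_mul_Wd_apply (p : ℂ[X]) :
    ((1 - Wz * Wd : WeylAlgebra) : Module.End ℂ ℂ[X]) p = p - X * derivative p := rfl

lemma Wz_sq_ne_zero : (Wz ^ 2 : WeylAlgebra) ≠ 0 := fun h => by
  have := coe_Wz_sq_apply 1
  rw [h, ZeroMemClass.coe_zero, LinearMap.zero_apply, mul_one] at this
  exact pow_ne_zero 2 X_ne_zero this.symm

lemma span_le_rightIdealOfRangeLE :
    span WeylAlgebraᵐᵒᵖ {Wz ^ 2, 1 - Wz * Wd} ≤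
      WeylAlgebra.rightIdealOfRangeLE (LinearMap.ker (lcoeff ℂ 1)) := by
  rw [span_le, Set.insert_subset_iff, Set.singleton_subset_iff]
  refine ⟨fun p => ?_, fun p => ?_⟩
  · rw [LinearMap.mem_ker, lcoeff_apply, coe_Wz_sq_apply, coeff_X_pow_mul', if_neg (by omega)]
  · rw [LinearMap.mem_ker, lcoeff_apply, coe_one_sub_Wz_mul_Wd_apply]
    simp [coeff_derivative]

lemma one_notMem_span : (1 : WeylAlgebra) ∉ span WeylAlgebraᵐᵒᵖ {Wz ^ 2, 1 - Wz * Wd} :=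
  fun h => one_ne_zero (α := ℂ) (by simpa using span_le_rightIdealOfRangeLE h X)

lemma not_exists_span_eq_span_singleton :
    ¬∃ g : WeylAlgebra,
      span WeylAlgebraᵐᵒᵖ {Wz ^ 2, 1 - Wz * Wd} = span WeylAlgebraᵐᵒᵖ {g} := by
  rintro ⟨g, hg⟩
  have hdvd : ∀ x ∈ ({Wz ^ 2, 1 - Wz * Wd} : Set WeylAlgebra), ∃ c, g * c = x :=
    fun x hx => by
      obtain ⟨a, ha⟩ := mem_span_singleton.1 (hg ▸ subset_span hx)
      exact ⟨a.unop, ha⟩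
  obtain ⟨c, hc⟩ := hdvd _ (Set.mem_insert _ _)
  obtain ⟨d, hd⟩ := hdvd _ (Set.mem_insert_of_mem _ rfl)
  obtain ⟨Rg, Pg, hPg⟩ := exists_hasWeightExpansion_of_mem_adjoin g.2
  obtain ⟨Rc, Pc, hPc⟩ := exists_hasWeightExpansion_of_mem_adjoin c.2
  have hgc : ∀ p, (g : Module.End ℂ ℂ[X]) ((c : Module.End ℂ ℂ[X]) p) = X ^ 2 * p :=
    fun p => by rw [← coe_Wz_sq_apply, ← hc]; rfl
  have hgd : (g : Module.End ℂ ℂ[X]) ((d : Module.End ℂ ℂ[X]) 1) = 1 := by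
    change ((g * d : WeylAlgebra) : Module.End ℂ ℂ[X]) 1 = 1
    rw [hd, coe_one_sub_Wz_mul_Wd_apply, derivative_one, mul_zero, sub_zero]
  obtain ⟨b, hb, hgb⟩ := hPg.eq_algebraMap_of_comp_eq_X_pow_mul hPc hgc hgd
  have hg1 : g * algebraMap ℂ WeylAlgebra b⁻¹ = 1 := by
    rw [show g = algebraMap ℂ WeylAlgebra b from Subtype.ext hgb, ← map_mul,
      mul_inv_cancel₀ hb, map_one]
  exact one_notMem_span (hg ▸ mem_span_singleton.2 ⟨MulOpposite.op _, hg1⟩)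

end WeylAlgebra

/-- In the Weyl algebra (where `∂z - z∂ = 1`), the right ideal generated
by `z²` and `1 - z∂` is a proper nonzero right ideal which is not principal.  (Right
ideals are submodules of the Weyl algebra viewed as a right module over itself, i.e.
as a module over the opposite ring.) -/
theorem weyl_right_ideal_not_principal :
    Wd * Wz - Wz * Wd = 1 ∧
    Submodule.span (WeylAlgebra)ᵐᵒᵖ ({Wz ^ 2, 1 - Wz * Wd} : Set WeylAlgebra) ≠ ⊥ ∧
    Submodule.span (WeylAlgebra)ᵐᵒᵖ ({Wz ^ 2, 1 - Wz * Wd} : Set WeylAlgebra) ≠ ⊤ ∧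
    ¬∃ g : WeylAlgebra,
        Submodule.span (WeylAlgebra)ᵐᵒᵖ ({Wz ^ 2, 1 - Wz * Wd} : Set WeylAlgebra) =
          Submodule.span (WeylAlgebra)ᵐᵒᵖ ({g} : Set WeylAlgebra) := by
  refine ⟨Wd_mul_Wz_sub_Wz_mul_Wd, fun h => ?_, fun h => ?_, not_exists_span_eq_span_singleton⟩
  · exact Wz_sq_ne_zero (Submodule.span_eq_bot.1 h _ (Set.mem_insert _ _))
  · exact one_notMem_span (h ▸ Submodule.mem_top)
end

section
/- Let X, Y be n×n complex matrices with [X,Y] = -Id + v w^T for some vectors v, w ∈ ℂⁿ. If U ⊆ ℂⁿ is a subspace invariant under both X and Y and v ∈ U, then U = ℂⁿ. -/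
open Matrix

open LinearMap Module

noncomputable def wFun {n : ℕ} (w : Fin n → ℂ) : (Fin n → ℂ) →ₗ[ℂ] ℂ where
  toFun u := w ⬝ᵥ u
  map_add' a b := by simp [dotProduct_add]
  map_smul' c a := by simp [dotProduct_smul]


/-- If `[X,Y] = -Id + v wᵀ` (`n ≥ 1`) and `U ⊆ ℂⁿ` is a subspace
invariant under both `X` and `Y` with `v ∈ U`, then `U = ⊤`.  (Restricting the
identity to `U` and taking traces gives `0 = -dim U + wᵀv = -dim U + n`.) -/
theorem invariant_subspace_containing_v_is_top (n : ℕ) (hn : 0 < n)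
    (X Y : Matrix (Fin n) (Fin n) ℂ) (v w : Fin n → ℂ)
    (h : X * Y - Y * X = -1 + Matrix.vecMulVec v w)
    (U : Submodule ℂ (Fin n → ℂ))
    (hXU : ∀ u ∈ U, X.mulVec u ∈ U)
    (hYU : ∀ u ∈ U, Y.mulVec u ∈ U)
    (hv : v ∈ U) :
    U = ⊤ := by
  -- full trace: w ⬝ᵥ v = n
  have htr : v ⬝ᵥ w = (n : ℂ) := by
    have h0 : Matrix.trace (X * Y - Y * X) = 0 := by
      rw [Matrix.trace_sub, Matrix.trace_mul_comm, sub_self]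
    rw [h] at h0
    have : Matrix.trace (Matrix.vecMulVec v w) = v ⬝ᵥ w := by
      simp [Matrix.trace, Matrix.diag, Matrix.vecMulVec_apply, dotProduct]
    rw [Matrix.trace_add, Matrix.trace_neg, Matrix.trace_one, this, Fintype.card_fin] at h0
    linear_combination h0
  -- restricted maps
  have hX : Set.MapsTo X.mulVecLin U U := fun u hu => hXU u hu
  have hY : Set.MapsTo Y.mulVecLin U U := fun u hu => hYU u hu
  set gX : Module.End ℂ U := X.mulVecLin.restrict hX with hgX
  set gY : Module.End ℂ U := Y.mulVecLin.restrict hY with hgY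
  have hC : Set.MapsTo (X.mulVecLin * Y.mulVecLin - Y.mulVecLin * X.mulVecLin) U U :=
    fun u hu => U.sub_mem (hX (hY hu)) (hY (hX hu))
  have hrestr : gX * gY - gY * gX
      = (X.mulVecLin * Y.mulVecLin - Y.mulVecLin * X.mulVecLin).restrict hC := by
    ext u
    simp [gX, gY, LinearMap.restrict_apply, Module.End.mul_apply]
    rfl
  have hmat : X.mulVecLin * Y.mulVecLin - Y.mulVecLin * X.mulVecLin
      = (-1 + Matrix.vecMulVec v w).mulVecLin := by
    rw [← h]
    apply LinearMap.ext; intro u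
    simp [Module.End.mul_apply, Matrix.sub_mulVec, Matrix.mulVec_mulVec]
  have ht0 : LinearMap.trace ℂ U (gX * gY - gY * gX) = 0 := by
    have e := congrArg (LinearMap.trace ℂ U) (sub_add_cancel (gX * gY) (gY * gX))
    rw [map_add, LinearMap.trace_mul_comm ℂ gX gY] at e
    exact add_eq_right.mp e
  rw [hrestr] at ht0
  -- rewrite the restricted map as -id + rank one
  have hr1 : Set.MapsTo (Matrix.vecMulVec v w).mulVecLin U U := by
    intro u hu
    have : (Matrix.vecMulVec v w).mulVec u = (w ⬝ᵥ u) • v := by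
      ext i
      simp [Matrix.mulVec, Matrix.vecMulVec_apply, dotProduct, Finset.mul_sum,
        Finset.sum_mul, mul_comm, mul_left_comm]
    simpa [Matrix.mulVecLin, this] using U.smul_mem _ hv
  have hsplit : (X.mulVecLin * Y.mulVecLin - Y.mulVecLin * X.mulVecLin).restrict hC
      = ((-LinearMap.id + ((Matrix.vecMulVec v w).mulVecLin.restrict hr1) : Module.End ℂ U)) := by
    apply LinearMap.ext; intro u
    have : ((-1 + Matrix.vecMulVec v w).mulVecLin) u.1 = -u.1 + (Matrix.vecMulVec v w).mulVecLin u.1 := by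
      simp [Matrix.mulVecLin, Matrix.add_mulVec, Matrix.neg_mulVec]
    apply Subtype.ext
    exact (LinearMap.congr_fun hmat u.1).trans this
  have hneg : LinearMap.trace ℂ U ((-LinearMap.id : Module.End ℂ U)) = -(Module.finrank ℂ U : ℂ) := by
    have e := congrArg (LinearMap.trace ℂ U) (neg_add_cancel (LinearMap.id : Module.End ℂ U))
    rw [map_add, map_zero, LinearMap.trace_id] at e
    linear_combination e
  simp only [hsplit, map_add, hneg] at ht0
  -- trace of rank one restriction
  have hrank : (Matrix.vecMulVec v w).mulVecLin.restrict hr1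
      = dualTensorHom ℂ U U ((wFun w ∘ₗ U.subtype) ⊗ₜ ⟨v, hv⟩) := by
    apply LinearMap.ext; intro u
    apply Subtype.ext
    have : (Matrix.vecMulVec v w).mulVec u.1 = (w ⬝ᵥ u.1) • v := by
      ext i
      simp [Matrix.mulVec, Matrix.vecMulVec_apply, dotProduct, Finset.mul_sum,
        Finset.sum_mul, mul_comm, mul_left_comm, mul_assoc]
    simp [LinearMap.restrict_apply, Matrix.mulVecLin, this, dualTensorHom_apply, wFun,
      mul_assoc, mul_comm, mul_left_comm]
    exact this
  rw [hrank, trace_eq_contract_apply, contractLeft_apply] at ht0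
  have hwv : (wFun w ∘ₗ U.subtype) ⟨v, hv⟩ = (n : ℂ) := by
    simp [wFun, dotProduct_comm]
    rw [dotProduct_comm] at htr ⊢
    exact htr
  rw [hwv] at ht0
  have hfin : finrank ℂ U = n := by
    have : ((finrank ℂ U : ℂ)) = (n : ℂ) := by linear_combination -ht0
    exact_mod_cast this
  apply Submodule.eq_top_of_finrank_eq
  rw [hfin, Module.finrank_fin_fun]
end
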